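/- If p ⊗ c majorises q ⊗ c for probability vectors p, q of dimension d and a probability vector c (a catalyst), then the largest entry of q is at most the largest entry of p, and the smallest entry of q is at least the smallest entry of p. -/

import Mathlib

/-!
For `k = 1` majorisation compares largest entries, and the largest entry of `r ⊗ c` is
`max r * max c`; cancelling `max c > 0` gives the first inequality.

Since the totals agree, majorisation also says that every `k`-subset sum of `q ⊗ c` is at least
the smallest `k`-subset sum of `p ⊗ c`. Take `k` one more than the number of entries killed by
zeros of `c`: then the smallest `k`-subset sum of `r ⊗ c` is `min r * c₁`, where `c₁` is the
least positive entry of `c`, and cancelling `c₁` gives the second inequality.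
-/

open Finset

/-- The sum of the `k` largest entries of `p` (as a supremum over subsets of size `k`). -/
noncomputable def sumLargest {ι : Type*} [Fintype ι] (p : ι → ℝ) (k : ℕ) : ℝ :=
  sSup {x : ℝ | ∃ s : Finset ι, s.card = k ∧ ∑ i ∈ s, p i = x}

/-- `p` majorises `q`: for every `k`, the sum of the `k` largest entries of `p`
is at least the sum of the `k` largest entries of `q`. -/
def Majorizes {ι : Type*} [Fintype ι] (p q : ι → ℝ) : Prop :=
  ∀ k : ℕ, k ≤ Fintype.card ι → sumLargest q k ≤ sumLargest p k

/-- A probability vector: nonnegative entries summing to 1. -/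
def IsProbVec {ι : Type*} [Fintype ι] (p : ι → ℝ) : Prop :=
  (∀ i, 0 ≤ p i) ∧ ∑ i, p i = 1

section

variable {ι κ : Type*} [Fintype ι] [Fintype κ]

theorem sum_le_sumLargest (p : ι → ℝ) (s : Finset ι) :
    ∑ i ∈ s, p i ≤ sumLargest p s.card := by
  refine le_csSup ?_ ⟨s, rfl, rfl⟩
  refine ((Set.finite_univ (α := Finset ι)).image fun s => ∑ i ∈ s, p i).bddAbove.mono ?_
  rintro _ ⟨s, -, rfl⟩
  exact ⟨s, trivial, rfl⟩

theorem sumLargest_le {p : ι → ℝ} {k : ℕ} {B : ℝ} (hk : k ≤ Fintype.card ι)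
    (hB : ∀ s : Finset ι, s.card = k → ∑ i ∈ s, p i ≤ B) :
    sumLargest p k ≤ B := by
  obtain ⟨s, -, hs⟩ := exists_subset_card_eq (s := (univ : Finset ι)) (by simpa using hk)
  refine csSup_le ⟨_, s, hs, rfl⟩ ?_
  rintro _ ⟨t, ht, rfl⟩
  exact hB t ht

namespace Majorizes

variable {f g : ι → ℝ}

theorem sum_le_of_forall_card_eq (h : Majorizes f g) (t : Finset ι) {B : ℝ}
    (hB : ∀ s : Finset ι, s.card = t.card → ∑ i ∈ s, f i ≤ B) :
    ∑ i ∈ t, g i ≤ B :=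
  calc ∑ i ∈ t, g i ≤ sumLargest g t.card := sum_le_sumLargest g t
    _ ≤ sumLargest f t.card := h _ (card_le_univ t)
    _ ≤ B := sumLargest_le (card_le_univ t) hB

theorem le_sum_of_forall_card_eq (h : Majorizes f g) (htot : ∑ i, f i ≤ ∑ i, g i)
    (t : Finset ι) {B : ℝ} (hB : ∀ s : Finset ι, s.card = t.card → B ≤ ∑ i ∈ s, f i) :
    B ≤ ∑ i ∈ t, g i := by
  classical
  have hcompl : ∑ i ∈ tᶜ, g i ≤ ∑ i, f i - B := by
    refine h.sum_le_of_forall_card_eq tᶜ fun s hs => ?_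
    have hsc : sᶜ.card = t.card := by
      rw [card_compl, hs, card_compl]
      have := card_le_univ t
      omega
    linarith [hB sᶜ hsc, sum_add_sum_compl s f]
  linarith [sum_add_sum_compl t g]

end Majorizes

theorem IsProbVec.nonempty {p : ι → ℝ} (hp : IsProbVec p) : Nonempty ι := by
  by_contra hι
  rw [not_nonempty_iff] at hι
  simpa using hp.2

theorem IsProbVec.exists_pos {p : ι → ℝ} (hp : IsProbVec p) : ∃ i, 0 < p i := by
  by_contra! h
  linarith [sum_nonpos fun i (_ : i ∈ univ) => h i, hp.2]

theorem IsProbVec.sum_mul_eq_one {p : ι → ℝ} {c : κ → ℝ} (hp : IsProbVec p)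
    (hc : IsProbVec c) : ∑ x : ι × κ, p x.1 * c x.2 = 1 := by
  rw [Fintype.sum_prod_type, ← sum_mul_sum, hp.2, hc.2, one_mul]

variable [Nonempty ι] {p q : ι → ℝ} {c : κ → ℝ}

theorem sSup_range_le_of_majorizes_mul (hp : ∀ i, 0 ≤ p i) (hc : ∀ j, 0 ≤ c j)
    (hc_pos : ∃ j, 0 < c j)
    (h : Majorizes (fun x : ι × κ => p x.1 * c x.2) (fun x : ι × κ => q x.1 * c x.2)) :
    sSup (Set.range q) ≤ sSup (Set.range p) := by
  obtain ⟨j, hj⟩ := hc_pos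
  have : Nonempty κ := ⟨j⟩
  obtain ⟨j₀, hj₀⟩ := Finite.exists_max c
  have hle_sup : ∀ i, p i ≤ sSup (Set.range p) :=
    fun i => le_csSup (Set.finite_range p).bddAbove ⟨i, rfl⟩
  have hsup_nonneg : 0 ≤ sSup (Set.range p) := (hp (Classical.arbitrary ι)).trans (hle_sup _)
  refine csSup_le (Set.range_nonempty q) ?_
  rintro _ ⟨i, rfl⟩
  have key : q i * c j₀ ≤ sSup (Set.range p) * c j₀ := by
    simpa using h.sum_le_of_forall_card_eq {(i, j₀)} fun s hs => by
      obtain ⟨⟨a, b⟩, rfl⟩ := card_eq_one.1 hs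
      simpa using mul_le_mul (hle_sup a) (hj₀ b) (hc b) hsup_nonneg
  exact le_of_mul_le_mul_right key (hj.trans_le (hj₀ j))

theorem sInf_range_le_of_majorizes_mul (hp : ∀ i, 0 ≤ p i) (hc : ∀ j, 0 ≤ c j)
    (hc_pos : ∃ j, 0 < c j)
    (htot : ∑ x : ι × κ, p x.1 * c x.2 ≤ ∑ x : ι × κ, q x.1 * c x.2)
    (h : Majorizes (fun x : ι × κ => p x.1 * c x.2) (fun x : ι × κ => q x.1 * c x.2)) :
    sInf (Set.range p) ≤ sInf (Set.range q) := by
  classical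
  obtain ⟨j₁, hj₁_mem, hj₁⟩ := exists_min_image (univ.filter (0 < c ·)) c
    (by simpa [Finset.Nonempty] using hc_pos)
  have hj₁_pos : 0 < c j₁ := (mem_filter.1 hj₁_mem).2
  have hinf_le : ∀ i, sInf (Set.range p) ≤ p i :=
    fun i => csInf_le (Set.finite_range p).bddBelow ⟨i, rfl⟩
  have hinf_nonneg : 0 ≤ sInf (Set.range p) :=
    le_csInf (Set.range_nonempty p) (by rintro _ ⟨i, rfl⟩; exact hp i)
  set Z := univ.filter fun x : ι × κ => c x.2 = 0
  have hB : ∀ s : Finset (ι × κ), s.card = Z.card + 1 →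
      sInf (Set.range p) * c j₁ ≤ ∑ x ∈ s, p x.1 * c x.2 := by
    intro s hs
    obtain ⟨x, hxs, hxZ⟩ := exists_mem_notMem_of_card_lt_card (s := Z) (t := s) (by omega)
    have hx_pos : 0 < c x.2 := (hc _).lt_of_ne (Ne.symm (by simpa [Z] using hxZ))
    calc sInf (Set.range p) * c j₁ ≤ p x.1 * c x.2 :=
          mul_le_mul (hinf_le _) (hj₁ _ (by simpa using hx_pos)) hj₁_pos.le (hp _)
      _ ≤ ∑ y ∈ s, p y.1 * c y.2 :=
          single_le_sum (fun y _ => mul_nonneg (hp _) (hc _)) hxs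
  refine le_csInf (Set.range_nonempty q) ?_
  rintro _ ⟨i, rfl⟩
  have hiZ : (i, j₁) ∉ Z := by simp [Z, hj₁_pos.ne']
  have key : sInf (Set.range p) * c j₁ ≤ q i * c j₁ := by
    have := h.le_sum_of_forall_card_eq htot (insert (i, j₁) Z)
      (by rwa [card_insert_of_notMem hiZ])
    rwa [sum_insert hiZ, sum_eq_zero fun x hx => by simp [(mem_filter.1 hx).2], add_zero]
      at this
  exact le_of_mul_le_mul_right key hj₁_pos

end

theorem catalytic_majorization_extreme_entries_general {d n : ℕ}
    (p q : Fin d → ℝ) (c : Fin n → ℝ)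
    (hp : IsProbVec p) (hq : IsProbVec q) (hc : IsProbVec c)
    (h : Majorizes (fun x : Fin d × Fin n => p x.1 * c x.2)
      (fun x : Fin d × Fin n => q x.1 * c x.2)) :
    sSup (Set.range q) ≤ sSup (Set.range p) ∧ sInf (Set.range p) ≤ sInf (Set.range q) := by
  have := hp.nonempty
  have htot : ∑ x : Fin d × Fin n, p x.1 * c x.2 ≤ ∑ x : Fin d × Fin n, q x.1 * c x.2 := by
    rw [hp.sum_mul_eq_one hc, hq.sum_mul_eq_one hc]
  exact ⟨sSup_range_le_of_majorizes_mul hp.1 hc.1 hc.exists_pos h,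
    sInf_range_le_of_majorizes_mul hp.1 hc.1 hc.exists_pos htot h⟩

/-- If `p ⊗ c` majorises `q ⊗ c` for some catalyst `c`, then the largest entry of `q`
is at most the largest entry of `p`, and the smallest entry of `q` is at least the
smallest entry of `p`. -/
theorem catalytic_majorization_extreme_entries {d n : ℕ} (hd : 0 < d) (hn : 0 < n)
    (p q : Fin d → ℝ) (c : Fin n → ℝ)
    (hp : IsProbVec p) (hq : IsProbVec q) (hc : IsProbVec c)
    (h : Majorizes (fun x : Fin d × Fin n => p x.1 * c x.2)
      (fun x : Fin d × Fin n => q x.1 * c x.2)) :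
    sSup (Set.range q) ≤ sSup (Set.range p) ∧ sInf (Set.range p) ≤ sInf (Set.range q) :=
  catalytic_majorization_extreme_entries_general p q c hp hq hc h
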